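/- Suppose b : (0,T)×(0,T)×(0,1) → ℝ is measurable and satisfies |(T−t)^{2k} e^{(4/T)⁴ sγd/(T−t)⁴} b(t,s',x)| ≤ M for a.e. (t,s',x). Then for every w ∈ L²((0,T)×(0,1)) and k ≥ 0, the function F(t,x) = ∫₀ᵗ b(t,s',x) w(s',x) ds' satisfies ∫∫_Q (sβ(t))^{−k} e^{2sγd β(t)} F(t,x)² dx dt ≤ C_T M² s^{−k} ∫∫_Q w² dx dt for some constant C_T depending only on T, k, γ, d. -/

import Mathlib

/-! With `X(t) = (T-t)^{2k} e^{(4/T)⁴ sγd/(T-t)⁴}` the kernel is bounded by `M / X(t)`,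
so Cauchy–Schwarz in `s'` gives `F(t,x)² ≤ T M² X(t)⁻² ∫₀ᵀ w(s',x)² ds'`. The weight is
absorbed by `X(t)²`: from `T⁻⁴ ≤ β(t)(T-t)⁴` and `β(t) ≤ (4/T)⁴/(T-t)⁴` one gets
`β^{-k} e^{2sγdβ} ≤ T^{4k} X(t)²`. Integrating in `t` costs another factor `T`, so
`C = T^{4k+2}` works. -/

open Set MeasureTheory

section CauchySchwarz

variable {α : Type*} [MeasurableSpace α] {μ : Measure α} [IsFiniteMeasure μ]

theorem sq_integral_abs_le_measureReal_mul_integral_sq {g : α → ℝ} (hg : MemLp g 2 μ) :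
    (∫ a, |g a| ∂μ) ^ 2 ≤ μ.real univ * ∫ a, g a ^ 2 ∂μ := by
  have holder := integral_mul_le_Lp_mul_Lq_of_nonneg Real.HolderConjugate.two_two
    (ae_of_all _ fun a => abs_nonneg (g a)) (ae_of_all _ fun _ => zero_le_one)
    (by rw [ENNReal.ofReal_ofNat]; exact hg.abs)
    (by simpa using memLp_const (μ := μ) (p := 2) (1 : ℝ))
  simp only [mul_one, one_pow, integral_const, smul_eq_mul, Real.rpow_two, sq_abs,
    ← Real.sqrt_eq_rpow] at holder
  calc (∫ a, |g a| ∂μ) ^ 2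
      ≤ (√(∫ a, g a ^ 2 ∂μ) * √(μ.real univ)) ^ 2 :=
        pow_le_pow_left₀ (integral_nonneg fun a => abs_nonneg _) holder 2
    _ = μ.real univ * ∫ a, g a ^ 2 ∂μ := by
      rw [mul_pow, Real.sq_sqrt (integral_nonneg fun a => sq_nonneg _),
        Real.sq_sqrt measureReal_nonneg, mul_comm]

theorem sq_integral_mul_le_of_abs_le {f g : α → ℝ} {L : ℝ} (hf : ∀ᵐ a ∂μ, |f a| ≤ L)
    (hg : MemLp g 2 μ) :
    (∫ a, f a * g a ∂μ) ^ 2 ≤ L ^ 2 * μ.real univ * ∫ a, g a ^ 2 ∂μ := by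
  have hbound : |∫ a, f a * g a ∂μ| ≤ L * ∫ a, |g a| ∂μ := by
    rw [← Real.norm_eq_abs, ← integral_const_mul L fun a => |g a|]
    refine norm_integral_le_of_norm_le ((hg.integrable one_le_two).abs.const_mul L) ?_
    filter_upwards [hf] with a ha
    rw [Real.norm_eq_abs, abs_mul]
    exact mul_le_mul_of_nonneg_right ha (abs_nonneg _)
  calc (∫ a, f a * g a ∂μ) ^ 2 = |∫ a, f a * g a ∂μ| ^ 2 := (sq_abs _).symm
    _ ≤ (L * ∫ a, |g a| ∂μ) ^ 2 := pow_le_pow_left₀ (abs_nonneg _) hbound 2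
    _ = L ^ 2 * (∫ a, |g a| ∂μ) ^ 2 := mul_pow _ _ _
    _ ≤ L ^ 2 * (μ.real univ * ∫ a, g a ^ 2 ∂μ) := by
      gcongr; exact sq_integral_abs_le_measureReal_mul_integral_sq hg
    _ = _ := by ring

end CauchySchwarz

theorem integral_prod_integral_fst_eq {α β : Type*} [MeasurableSpace α] [MeasurableSpace β]
    {μ : Measure α} {ν : Measure β} [IsFiniteMeasure μ] [SFinite ν] {f : α × β → ℝ}
    (hf : Integrable f (μ.prod ν)) :
    ∫ p, (∫ y, f (y, p.2) ∂μ) ∂(μ.prod ν) = μ.real univ * ∫ p, f p ∂(μ.prod ν) := by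
  rw [integral_fun_snd (fun x => ∫ y, f (y, x) ∂μ), integral_prod_symm f hf, smul_eq_mul]

/-- `(t(T-t))⁻⁴`, frozen at its value at `T/2` on `t ≤ T/2`. -/
noncomputable def carlemanWeight (T t : ℝ) : ℝ :=
  if t ≤ T / 2 then (2 / T) ^ 8 else 1 / (t * (T - t)) ^ 4

section CarlemanWeight

variable {T t : ℝ}

theorem carlemanWeight_nonneg (T t : ℝ) : 0 ≤ carlemanWeight T t := by
  unfold carlemanWeight; split_ifs <;> positivity

theorem carlemanWeight_le (ht : 0 < t) (htT : t < T) :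
    carlemanWeight T t ≤ (4 / T) ^ 4 / (T - t) ^ 4 := by
  have hT : 0 < T := ht.trans htT
  have hTt : 0 < T - t := sub_pos.2 htT
  unfold carlemanWeight
  split_ifs with h
  · rw [le_div_iff₀ (by positivity)]
    calc (2 / T) ^ 8 * (T - t) ^ 4 ≤ (2 / T) ^ 8 * T ^ 4 := by gcongr; linarith
      _ = (4 / T) ^ 4 := by field_simp; ring
  · rw [div_le_div_iff₀ (by positivity) (by positivity)]
    calc 1 * (T - t) ^ 4 ≤ (4 * t / T) ^ 4 * (T - t) ^ 4 := by
          gcongr; exact one_le_pow₀ (by rw [le_div_iff₀ hT]; linarith)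
      _ = (4 / T) ^ 4 * (t * (T - t)) ^ 4 := by ring

theorem inv_pow_four_le_carlemanWeight_mul (ht : 0 < t) (htT : t < T) :
    (T ^ 4)⁻¹ ≤ carlemanWeight T t * (T - t) ^ 4 := by
  have hT : 0 < T := ht.trans htT
  unfold carlemanWeight
  split_ifs with h
  · calc (T ^ 4)⁻¹ ≤ (2 / T) ^ 8 * (T / 2) ^ 4 := by
          rw [show (2 / T) ^ 8 * (T / 2) ^ 4 = 16 / T ^ 4 by field_simp; ring, inv_eq_one_div]
          gcongr; norm_num
      _ ≤ (2 / T) ^ 8 * (T - t) ^ 4 := by gcongr; linarith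
  · rw [show 1 / (t * (T - t)) ^ 4 * (T - t) ^ 4 = (t ^ 4)⁻¹ by
      field_simp [(sub_pos.2 htT).ne']]
    gcongr

theorem carlemanWeight_rpow_neg_le {k : ℝ} (hk : 0 ≤ k) (ht : 0 < t) (htT : t < T) :
    carlemanWeight T t ^ (-k) ≤ (T ^ 4) ^ k * ((T - t) ^ (2 * k)) ^ 2 := by
  have hTt : 0 < T - t := sub_pos.2 htT
  have hT4 : 0 < T ^ 4 := pow_pos (ht.trans htT) 4
  have hlow : (T ^ 4 * (T - t) ^ 4)⁻¹ ≤ carlemanWeight T t := by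
    rw [mul_inv, mul_inv_le_iff₀ (by positivity)]
    exact inv_pow_four_le_carlemanWeight_mul ht htT
  calc carlemanWeight T t ^ (-k) ≤ ((T ^ 4 * (T - t) ^ 4)⁻¹) ^ (-k) :=
        Real.rpow_le_rpow_of_nonpos (by positivity) hlow (neg_nonpos.2 hk)
    _ = (T ^ 4) ^ k * ((T - t) ^ 4) ^ k := by
        rw [Real.inv_rpow (by positivity), Real.rpow_neg (by positivity), inv_inv,
          Real.mul_rpow hT4.le (by positivity)]
    _ = (T ^ 4) ^ k * ((T - t) ^ (2 * k)) ^ 2 := by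
        rw [← Real.rpow_mul_natCast hTt.le, ← Real.rpow_natCast_mul hTt.le]
        congr 2; push_cast; ring

theorem exp_two_mul_carlemanWeight_le {a : ℝ} (ha : 0 ≤ a) (ht : 0 < t) (htT : t < T) :
    Real.exp (2 * a * carlemanWeight T t) ≤ Real.exp ((4 / T) ^ 4 * a / (T - t) ^ 4) ^ 2 := by
  rw [← Real.exp_nat_mul, Real.exp_le_exp, Nat.cast_ofNat, mul_assoc, mul_div_right_comm,
    mul_comm _ a]
  gcongr
  exact carlemanWeight_le ht htT

theorem carlemanWeight_rpow_neg_mul_exp_le {k a : ℝ} (hk : 0 ≤ k) (ha : 0 ≤ a) (ht : 0 < t)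
    (htT : t < T) :
    carlemanWeight T t ^ (-k) * Real.exp (2 * a * carlemanWeight T t) ≤
      (T ^ 4) ^ k * ((T - t) ^ (2 * k) * Real.exp ((4 / T) ^ 4 * a / (T - t) ^ 4)) ^ 2 := by
  rw [mul_pow, ← mul_assoc]
  exact mul_le_mul (carlemanWeight_rpow_neg_le hk ht htT)
    (exp_two_mul_carlemanWeight_le ha ht htT) (Real.exp_pos _).le (by positivity)

end CarlemanWeight

theorem weighted_sq_memory_term_le {T s a k t M : ℝ} {c g : ℝ → ℝ} (hs : 0 < s) (ha : 0 ≤ a)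
    (hk : 0 ≤ k) (ht : 0 < t) (htT : t < T)
    (hc : ∀ s' ∈ Ioo 0 T,
      |(T - t) ^ (2 * k) * Real.exp ((4 / T) ^ 4 * a / (T - t) ^ 4) * c s'| ≤ M)
    (hg : MemLp g 2 (volume.restrict (Ioo 0 T))) :
    (s * carlemanWeight T t) ^ (-k) * Real.exp (2 * a * carlemanWeight T t)
        * (∫ s' in (0 : ℝ)..t, c s' * g s') ^ 2
      ≤ (T ^ 4) ^ k * T * M ^ 2 * s ^ (-k) * ∫ s' in Ioo 0 T, g s' ^ 2 := by
  have hT : 0 < T := ht.trans htT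
  set X := (T - t) ^ (2 * k) * Real.exp ((4 / T) ^ 4 * a / (T - t) ^ 4)
  have hX : 0 < X := mul_pos (Real.rpow_pos_of_pos (sub_pos.2 htT) _) (Real.exp_pos _)
  have hsub : Ioc 0 t ⊆ Ioo 0 T := fun y hy => ⟨hy.1, hy.2.trans_lt htT⟩
  have hcX : ∀ᵐ s' ∂volume.restrict (Ioc 0 t), |c s'| ≤ M / X := by
    filter_upwards [ae_restrict_mem measurableSet_Ioc] with s' hs'
    have := hc s' (hsub hs')
    rwa [abs_mul, abs_of_pos hX, ← le_div_iff₀' hX] at this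
  have hmemory : (∫ s' in (0 : ℝ)..t, c s' * g s') ^ 2
      ≤ (M / X) ^ 2 * T * ∫ s' in Ioo 0 T, g s' ^ 2 := by
    rw [intervalIntegral.integral_of_le ht.le]
    calc (∫ s' in Ioc 0 t, c s' * g s') ^ 2
        ≤ (M / X) ^ 2 * volume.real (Ioc 0 t) * ∫ s' in Ioc 0 t, g s' ^ 2 := by
          simpa using sq_integral_mul_le_of_abs_le hcX
            (hg.mono_measure (Measure.restrict_mono hsub le_rfl))
      _ ≤ (M / X) ^ 2 * T * ∫ s' in Ioo 0 T, g s' ^ 2 := by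
          gcongr
          · rw [Real.volume_real_Ioc_of_le ht.le]; linarith
          · exact ae_of_all _ fun _ => sq_nonneg _
          · exact (memLp_two_iff_integrable_sq hg.1).1 hg
  have hweight := carlemanWeight_rpow_neg_mul_exp_le hk ha ht htT
  rw [Real.mul_rpow hs.le (carlemanWeight_nonneg T t)]
  calc s ^ (-k) * carlemanWeight T t ^ (-k) * Real.exp (2 * a * carlemanWeight T t)
        * (∫ s' in (0 : ℝ)..t, c s' * g s') ^ 2
      ≤ s ^ (-k) * ((T ^ 4) ^ k * X ^ 2) * ((M / X) ^ 2 * T * ∫ s' in Ioo 0 T, g s' ^ 2) := by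
        rw [mul_assoc (s ^ (-k))]
        gcongr
    _ = (T ^ 4) ^ k * T * M ^ 2 * s ^ (-k) * ∫ s' in Ioo 0 T, g s' ^ 2 := by
        field_simp

open intervalIntegral

/-- If the memory kernel `b` satisfies the weighted bound
`|(T−t)^{2k} e^{(4/T)⁴ sγd/(T−t)⁴} b(t,s',x)| ≤ M`, then the memory term
`F(t,x) = ∫₀ᵗ b(t,s',x) w(s',x) ds'` satisfies
`∫∫_Q (sβ(t))^{−k} e^{2sγdβ(t)} F² ≤ C M² s^{−k} ∫∫_Q w²`
for a constant `C` depending only on `T, k, γ, d, s`. -/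
theorem memory_term_estimate (T s γ d k : ℝ)
    (hT : 0 < T) (hs : 0 < s) (hγ : 0 < γ) (hd : 0 < d) (hk : 0 ≤ k)
    (β : ℝ → ℝ)
    (hβ : β = fun t => if t ≤ T/2 then (2/T) ^ 8 else 1 / (t * (T - t)) ^ 4) :
    ∃ C > 0, ∀ (b : ℝ → ℝ → ℝ → ℝ) (M : ℝ) (w : ℝ → ℝ → ℝ),
      Measurable (fun p : ℝ × ℝ × ℝ => b p.1 p.2.1 p.2.2) →
      Measurable (fun p : ℝ × ℝ => w p.1 p.2) →
      IntegrableOn (fun p : ℝ × ℝ => (w p.1 p.2) ^ 2)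
        ((Ioo 0 T) ×ˢ (Ioo (0:ℝ) 1)) →
      (∀ t ∈ Ioo (0:ℝ) T, ∀ s' ∈ Ioo (0:ℝ) T, ∀ x ∈ Ioo (0:ℝ) 1,
        |(T - t) ^ (2 * k) * Real.exp ((4/T) ^ 4 * s * γ * d / (T - t) ^ 4)
          * b t s' x| ≤ M) →
      ∫ p in (Ioo 0 T) ×ˢ (Ioo (0:ℝ) 1),
          (s * β p.1) ^ (-k) * Real.exp (2 * s * γ * d * β p.1)
            * (∫ s' in (0:ℝ)..p.1, b p.1 s' p.2 * w s' p.2) ^ 2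
        ≤ C * M ^ 2 * s ^ (-k)
            * ∫ p in (Ioo 0 T) ×ˢ (Ioo (0:ℝ) 1), (w p.1 p.2) ^ 2 := by
  obtain rfl : β = carlemanWeight T := hβ
  refine ⟨(T ^ 4) ^ k * T ^ 2, by positivity, fun b M w _ hw hw2 hb => ?_⟩
  simp_rw [show (4 / T) ^ 4 * s * γ * d = (4 / T) ^ 4 * (s * γ * d) by ring,
    show 2 * s * γ * d = 2 * (s * γ * d) by ring] at hb ⊢
  set μ := volume.restrict (Ioo 0 T)
  set ν := volume.restrict (Ioo (0 : ℝ) 1)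
  have hQ : volume.restrict (Ioo 0 T ×ˢ Ioo (0 : ℝ) 1) = μ.prod ν := by
    rw [Measure.volume_eq_prod, Measure.prod_restrict]
  have hmem : ∀ᵐ p ∂μ.prod ν, p ∈ Ioo 0 T ×ˢ Ioo (0 : ℝ) 1 := by
    rw [← hQ]; exact ae_restrict_mem (measurableSet_Ioo.prod measurableSet_Ioo)
  rw [IntegrableOn, hQ] at hw2
  rw [hQ]
  have hsections : ∀ᵐ p ∂μ.prod ν, MemLp (fun s' => w s' p.2) 2 μ :=
    Measure.quasiMeasurePreserving_snd.ae <| hw2.prod_left_ae.mono fun x hx =>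
      (memLp_two_iff_integrable_sq (hw.comp (by fun_prop)).aestronglyMeasurable).2 hx
  calc _ ≤ ∫ p, (T ^ 4) ^ k * T * M ^ 2 * s ^ (-k) * ∫ s', w s' p.2 ^ 2 ∂μ ∂μ.prod ν := by
        refine integral_mono_of_nonneg (ae_of_all _ fun p => by
            have := carlemanWeight_nonneg T p.1; positivity)
          ((integrable_const _).mul_prod hw2.integral_prod_right) ?_
        filter_upwards [hmem, hsections] with p ⟨⟨ht, htT⟩, hx⟩ hp
        exact weighted_sq_memory_term_le hs (by positivity) hk ht htT
          (fun s' hs' => hb p.1 ⟨ht, htT⟩ s' hs' p.2 hx) hp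
    _ = _ := by
        rw [MeasureTheory.integral_const_mul, integral_prod_integral_fst_eq hw2]
        simp only [μ, measureReal_restrict_apply_univ, Real.volume_real_Ioo_of_le hT.le,
          sub_zero]
        ring
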